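/- arXiv:1208.2823 — 3 statements merged into one kernel-verified Lean document; each statement's English description precedes it below -/
import Mathlib

section
/- Let V be a real subspace of ℂ^n of constant Kähler angle φ ∈ [0, π/2), and define J_φ : V → V by J_φ v = (1/cos φ)·π_V(Jv). Then J_φ is a surjective real-linear isometry of V which is skew-symmetric, i.e. ⟨J_φ v, w⟩ = −⟨v, J_φ w⟩ for all v, w ∈ V, and satisfies J_φ² = −id_V; in particular J_φ endows V with the structure of a complex vector space. -/
noncomputable section

/-- `ℂ^n` as a Euclidean space. -/
abbrev En (n : ℕ) : Type := EuclideanSpace ℂ (Fin n)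

/-- The complex structure `J`, multiplication by `i`. -/
def Jc {n : ℕ} (x : En n) : En n := Complex.I • x

/-- A real subspace `V` of `ℂ^n` has constant Kähler angle `φ` if
`‖π_V (J v)‖² = cos²(φ) ‖v‖²` for all `v ∈ V`. -/
def HasConstKahlerAngle {n : ℕ} (V : Submodule ℝ (En n)) (φ : ℝ) : Prop :=
  ∀ v ∈ V, ‖(Submodule.orthogonalProjectionOnto V (Jc v) : En n)‖ ^ 2 = Real.cos φ ^ 2 * ‖v‖ ^ 2

/-! The real inner product on `ℂ^n` makes `J` skew, and for `v, w ∈ V` we have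
`⟨π_V (J v), w⟩ = ⟨J v, w⟩`, so `J_φ` is skew as well. The Kähler angle condition makes `J_φ` an
isometry, and a skew isometry `T` satisfies `⟨T² v, w⟩ = -⟨T v, T w⟩ = -⟨v, w⟩`, i.e. `T² = -1`;
this also gives surjectivity. -/

open scoped InnerProductSpace

-- The real inner product on `EuclideanSpace ℂ ι` is the coordinatewise one, not `re ⟪·, ·⟫_ℂ`
-- (the two agree only propositionally), hence the computation in coordinates.
theorem EuclideanSpace.real_inner_I_smul_left {ι : Type*} [Fintype ι] (x y : EuclideanSpace ℂ ι) :
    ⟪Complex.I • x, y⟫_ℝ = -⟪x, Complex.I • y⟫_ℝ := by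
  simp only [PiLp.inner_apply, PiLp.smul_apply, smul_eq_mul, Complex.inner,
    ← Finset.sum_neg_distrib]
  refine Finset.sum_congr rfl fun i _ => ?_
  simp only [map_mul, Complex.conj_I, Complex.mul_re, Complex.mul_im, Complex.I_re, Complex.I_im,
    Complex.neg_re, Complex.neg_im, Complex.conj_re, Complex.conj_im]
  ring

section RealInnerProductSpace

variable {E : Type*} [NormedAddCommGroup E] [InnerProductSpace ℝ E]

theorem Submodule.real_inner_orthogonalProjectionOnto_of_skew (V : Submodule ℝ E)
    [V.HasOrthogonalProjection] {J : E → E} (hJ : ∀ x y, ⟪J x, y⟫_ℝ = -⟪x, J y⟫_ℝ) (v w : V) :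
    ⟪(V.orthogonalProjectionOnto (J v) : E), w⟫_ℝ =
      -⟪(v : E), V.orthogonalProjectionOnto (J w)⟫_ℝ := by
  rw [← V.coe_inner, ← V.coe_inner, inner_orthogonalProjectionOnto_eq_of_mem_right,
    inner_orthogonalProjectionOnto_eq_of_mem_left, hJ]

-- Stated for additive maps: for `T : V →ₗ[ℝ] V` on a submodule of `ℂ^n`, the module structure in
-- the type of `T` and the one underlying `InnerProductSpace ℝ V` unify only very slowly.
theorem AddMonoidHom.real_inner_map_map_of_norm_map (T : E →+ E) (hnorm : ∀ v, ‖T v‖ = ‖v‖)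
    (v w : E) : ⟪T v, T w⟫_ℝ = ⟪v, w⟫_ℝ := by
  rw [real_inner_eq_norm_add_mul_self_sub_norm_mul_self_sub_norm_mul_self_div_two,
    real_inner_eq_norm_add_mul_self_sub_norm_mul_self_sub_norm_mul_self_div_two, ← map_add,
    hnorm, hnorm, hnorm]

theorem AddMonoidHom.map_map_eq_neg_of_skew_of_norm_map (T : E →+ E)
    (hskew : ∀ v w, ⟪T v, w⟫_ℝ = -⟪v, T w⟫_ℝ) (hnorm : ∀ v, ‖T v‖ = ‖v‖) (v : E) :
    T (T v) = -v := by
  refine ext_inner_right ℝ fun w => ?_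
  rw [hskew, inner_neg_left, T.real_inner_map_map_of_norm_map hnorm]

end RealInnerProductSpace

theorem HasConstKahlerAngle.norm_orthogonalProjectionOnto_Jc {n : ℕ} {V : Submodule ℝ (En n)}
    {φ : ℝ} (hV : HasConstKahlerAngle V φ) (hφ : 0 ≤ Real.cos φ) {v : En n} (hv : v ∈ V) :
    ‖(V.orthogonalProjectionOnto (Jc v) : En n)‖ = Real.cos φ * ‖v‖ := by
  rw [← pow_left_inj₀ (norm_nonneg _) (by positivity) two_ne_zero, hV v hv, mul_pow]

/-- On a real subspace of constant Kähler angle `φ ∈ [0, π/2)`, the operator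
`J_φ = (1/cos φ) π_V ∘ J` is a surjective skew-symmetric linear isometry of `V`
satisfying `J_φ² = -id`, hence a complex structure on `V`. -/
theorem Jphi_isometry_skew_complexStructure (n : ℕ) (V : Submodule ℝ (En n))
    (φ : ℝ) (hφ0 : 0 ≤ φ) (hφ1 : φ < Real.pi / 2)
    (hV : HasConstKahlerAngle V φ)
    (Jφ : V →ₗ[ℝ] V)
    (hJφ : ∀ v : V, (Jφ v : En n)
        = (1 / Real.cos φ) • (Submodule.orthogonalProjectionOnto V (Jc (v : En n)) : En n)) :
    Function.Surjective Jφ ∧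
    (∀ v : V, ‖Jφ v‖ = ‖v‖) ∧
    (∀ v w : V, (inner ℝ (Jφ v) w : ℝ) = -(inner ℝ v (Jφ w) : ℝ)) ∧
    (∀ v : V, Jφ (Jφ v) = -v) := by
  have hcos : 0 < Real.cos φ := Real.cos_pos_of_mem_Ioo ⟨by linarith [Real.pi_pos], hφ1⟩
  have hnorm (v : V) : ‖Jφ v‖ = ‖v‖ := by
    change ‖(Jφ v : En n)‖ = ‖(v : En n)‖
    rw [hJφ, norm_smul, hV.norm_orthogonalProjectionOnto_Jc hcos.le v.2,
      Real.norm_of_nonneg (by positivity), one_div, inv_mul_cancel_left₀ hcos.ne']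
  have hskew (v w : V) : ⟪Jφ v, w⟫_ℝ = -⟪v, Jφ w⟫_ℝ := by
    rw [V.coe_inner, V.coe_inner, hJφ, hJφ, real_inner_smul_left, real_inner_smul_right,
      V.real_inner_orthogonalProjectionOnto_of_skew (J := Jc) EuclideanSpace.real_inner_I_smul_left,
      mul_neg]
  have hsq : ∀ v : V, Jφ (Jφ v) = -v := Jφ.toAddMonoidHom.map_map_eq_neg_of_skew_of_norm_map hskew hnorm
  exact ⟨fun v => ⟨-Jφ v, by rw [map_neg, hsq, neg_neg]⟩, hnorm, hskew, hsq⟩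
end
end

section
/- Every real subspace of ℂ^n with constant Kähler angle φ ∈ [0, π/2) has even real dimension. -/
/-!
The compression `T = π_V ∘ J` of the complex structure to `V` is skew-symmetric, because `J` is.
The Kähler angle condition `‖T v‖ = cos φ ‖v‖` with `cos φ > 0` makes `T` injective, and an
injective skew-symmetric endomorphism satisfies `det T = det Tᵀ = (-1) ^ dim V * det T` with
`det T ≠ 0`, so `dim V` is even.
-/

noncomputable section

open InnerProductSpace Module

namespace LinearMap

variable {𝕜 E : Type*} [RCLike 𝕜] [NormedAddCommGroup E] [InnerProductSpace 𝕜 E]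

theorem det_adjoint [FiniteDimensional 𝕜 E] (f : E →ₗ[𝕜] E) :
    (adjoint f).det = star f.det := by
  let b := stdOrthonormalBasis 𝕜 E
  rw [← det_toMatrix b.toBasis, toMatrix_adjoint, Matrix.det_conjTranspose, det_toMatrix]

def IsSkewSymmetric (T : E →ₗ[𝕜] E) : Prop :=
  ∀ x y, ⟪T x, y⟫_𝕜 = -⟪x, T y⟫_𝕜

theorem IsSkewSymmetric.compression {A : E →ₗ[𝕜] E} (hA : A.IsSkewSymmetric)
    (K : Submodule 𝕜 E) [K.HasOrthogonalProjection] :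
    (K.orthogonalProjectionOnto.toLinearMap ∘ₗ A ∘ₗ K.subtype).IsSkewSymmetric := by
  intro x y
  simp only [comp_apply, ContinuousLinearMap.coe_coe, Submodule.subtype_apply,
    K.inner_orthogonalProjectionOnto_eq_of_mem_left,
    K.inner_orthogonalProjectionOnto_eq_of_mem_right, hA x]

theorem IsSkewSymmetric.adjoint_eq_neg [FiniteDimensional 𝕜 E] {T : E →ₗ[𝕜] E}
    (hT : T.IsSkewSymmetric) : adjoint T = -T :=
  ((eq_adjoint_iff _ _).mpr fun x y => by rw [neg_apply, inner_neg_left, hT, neg_neg]).symm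

theorem IsSkewSymmetric.even_finrank_of_injective {E : Type*} [NormedAddCommGroup E]
    [InnerProductSpace ℝ E] [FiniteDimensional ℝ E] {T : E →ₗ[ℝ] E} (hT : T.IsSkewSymmetric)
    (hinj : Function.Injective T) : Even (finrank ℝ E) := by
  have hdet : T.det ≠ 0 := by
    rwa [Ne, det_eq_zero_iff_ker_ne_bot, not_not, ker_eq_bot]
  have h : T.det = (-1) ^ finrank ℝ E * T.det :=
    calc T.det = (adjoint T).det := by rw [T.det_adjoint, star_trivial]
      _ = ((-1 : ℝ) • T).det := by rw [hT.adjoint_eq_neg, neg_one_smul]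
      _ = (-1) ^ finrank ℝ E * T.det := det_smul _ _
  exact (neg_one_pow_eq_one_iff_even (by norm_num)).mp ((mul_eq_right₀ hdet).mp h.symm)

end LinearMap

theorem EuclideanSpace.isSkewSymmetric_I_smul (ι : Type*) [Fintype ι] :
    (DistribSMul.toLinearMap ℝ (EuclideanSpace ℂ ι) Complex.I).IsSkewSymmetric := by
  intro x y
  -- the real inner product on `EuclideanSpace ℂ ι` is the coordinatewise one, not `re ⟪·, ·⟫_ℂ`
  have hre (u v : EuclideanSpace ℂ ι) : ⟪u, v⟫_ℝ = (⟪u, v⟫_ℂ).re := by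
    simp [PiLp.inner_apply]
  simp [hre]

def kahlerOperator {n : ℕ} (V : Submodule ℝ (En n)) : V →ₗ[ℝ] V :=
  V.orthogonalProjectionOnto.toLinearMap ∘ₗ DistribSMul.toLinearMap ℝ (En n) Complex.I ∘ₗ
    V.subtype

theorem isSkewSymmetric_kahlerOperator {n : ℕ} (V : Submodule ℝ (En n)) :
    LinearMap.IsSkewSymmetric (𝕜 := ℝ) (E := V) (kahlerOperator V) :=
  (EuclideanSpace.isSkewSymmetric_I_smul (Fin n)).compression V

theorem HasConstKahlerAngle.injective_kahlerOperator {n : ℕ} {V : Submodule ℝ (En n)} {φ : ℝ}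
    (hV : HasConstKahlerAngle V φ) (hφ : Real.cos φ ≠ 0) :
    Function.Injective (kahlerOperator V) := by
  refine (injective_iff_map_eq_zero _).mpr fun v hv => ?_
  have h := hV v v.2
  change ‖((kahlerOperator V v : V) : En n)‖ ^ 2 = _ at h
  rw [hv] at h
  simpa [hφ] using h

/-- A real subspace of `ℂ^n` of constant Kähler angle `φ ∈ [0, π/2)` has even
real dimension. -/
theorem even_finrank_of_constKahlerAngle (n : ℕ) (V : Submodule ℝ (En n))
    (φ : ℝ) (hφ0 : 0 ≤ φ) (hφ1 : φ < Real.pi / 2)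
    (hV : HasConstKahlerAngle V φ) :
    Even (Module.finrank ℝ V) := by
  have hcos : Real.cos φ ≠ 0 :=
    (Real.cos_pos_of_mem_Ioo ⟨by linarith [Real.pi_pos], hφ1⟩).ne'
  exact (isSkewSymmetric_kahlerOperator V).even_finrank_of_injective
    (hV.injective_kahlerOperator hcos)
end
end

section
/- Let V be a real subspace of ℂ^n with Kähler-angle decomposition V = V_1 ⊕ ⋯ ⊕ V_r. Then the orthogonal complement of V in ℂ^n (with respect to the real inner product) is the internal orthogonal direct sum of the subspaces ℂV_i ⊖ V_i, for i = 1, …, r, together with the orthogonal complement of ℂV in ℂ^n; moreover each nonzero summand ℂV_i ⊖ V_i occurs only when φ_i ≠ 0, since ℂV_i = V_i when φ_i = 0. -/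
noncomputable section

/-- The complex span of a real subspace of `ℂ^n`, viewed as a real subspace. -/
def CSpan {n : ℕ} (V : Submodule ℝ (En n)) : Submodule ℝ (En n) :=
  (Submodule.span ℂ (V : Set (En n))).restrictScalars ℝ

/-!
The complex spans `ℂV_i` are mutually orthogonal, since Hermitian orthogonality of `V_i` and
`V_j` passes to their complex spans, and `ℂV` is their sum. For `x ⊥ V`, the projection of `x`
onto `ℂV_i` is still orthogonal to `V_i ⊆ ℂV_i` (projections are self-adjoint), so it lies in
`ℂV_i ⊖ V_i`, and what remains of `x` after subtracting these projections is orthogonal to every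
`ℂV_i`, i.e. lies in `(ℂV)ᗮ`. At Kähler angle `0`, `‖π_V (Jv)‖ = ‖Jv‖` forces `Jv ∈ V`, so `V` is
already complex and `ℂV ⊖ V = 0`.
-/

open Submodule

section OrthogonalDecomposition

variable {𝕜 E ι : Type*} [RCLike 𝕜] [NormedAddCommGroup E] [InnerProductSpace 𝕜 E]

theorem Submodule.inner_starProjection_eq_of_mem_left {K : Submodule 𝕜 E}
    [K.HasOrthogonalProjection] {u : E} (hu : u ∈ K) (v : E) :
    inner 𝕜 u (K.starProjection v) = inner 𝕜 u v := by
  rw [← inner_starProjection_left_eq_right, starProjection_eq_self_iff.mpr hu]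

theorem orthogonal_iSup_eq_of_pairwise_isOrtho [Fintype ι] {K V : ι → Submodule 𝕜 E}
    [∀ i, (K i).HasOrthogonalProjection] (hK : Pairwise fun i j => K i ⟂ K j)
    (hV : ∀ i, V i ≤ K i) :
    (⨆ i, V i)ᗮ = (⨆ i, K i ⊓ (V i)ᗮ) ⊔ (⨆ i, K i)ᗮ := by
  apply le_antisymm
  · intro x hx
    have hproj : ∀ i, (K i).starProjection x ∈ K i ⊓ (V i)ᗮ := fun i =>
      ⟨starProjection_apply_mem _ x, fun v hv => by
        rw [inner_starProjection_eq_of_mem_left (hV i hv)]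
        exact hx v (mem_iSup_of_mem i hv)⟩
    have hrest : x - ∑ i, (K i).starProjection x ∈ (⨆ i, K i)ᗮ := by
      rw [← iInf_orthogonal, mem_iInf]
      intro j k hk
      rw [inner_sub_right, inner_sum, Finset.sum_eq_single j
        (fun i _ hij => (hK hij).symm.inner_eq hk (starProjection_apply_mem _ x)) (by simp),
        inner_starProjection_eq_of_mem_left hk, sub_self]
    rw [← add_sub_cancel (∑ i, (K i).starProjection x) x]
    exact add_mem (mem_sup_left (sum_mem fun i _ => mem_iSup_of_mem i (hproj i)))
      (mem_sup_right hrest)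
  · refine sup_le (iSup_le fun i => ?_) (orthogonal_le (iSup_mono hV))
    rw [← iInf_orthogonal]
    refine le_iInf fun j => ?_
    by_cases hij : i = j
    · exact hij ▸ inf_le_right
    · exact inf_le_left.trans ((hK hij).mono_right (hV j))

end OrthogonalDecomposition

section ComplexSpan

theorem restrictScalars_span_eq_of_I_smul_mem {E : Type*} [AddCommGroup E] [Module ℂ E]
    [Module ℝ E] [IsScalarTower ℝ ℂ E] {V : Submodule ℝ E} (hV : ∀ v ∈ V, Complex.I • v ∈ V) :
    (span ℂ (V : Set E)).restrictScalars ℝ = V := by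
  refine le_antisymm (fun x hx => ?_) subset_span
  induction hx using span_induction with
  | mem v hv => exact hv
  | zero => exact V.zero_mem
  | add a b _ _ ha hb => exact V.add_mem ha hb
  | smul c a _ ha =>
    have hc : c • a = c.re • a + c.im • (Complex.I • a) := by
      rw [algebra_compatible_smul ℂ c.re, algebra_compatible_smul ℂ c.im, smul_smul, ← add_smul,
        Complex.coe_algebraMap, Complex.re_add_im]
    rw [hc]
    exact V.add_mem (V.smul_mem _ ha) (V.smul_mem _ (hV a ha))

variable {n : ℕ}

theorem EuclideanSpace.real_inner_eq_re_complex_inner {ι : Type*} [Fintype ι]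
    (x y : EuclideanSpace ℂ ι) : inner ℝ x y = (inner ℂ x y).re := by
  simp [inner]

theorem le_cSpan (V : Submodule ℝ (En n)) : V ≤ CSpan V := subset_span

theorem cSpan_mono {V W : Submodule ℝ (En n)} (h : V ≤ W) : CSpan V ≤ CSpan W :=
  span_mono h

theorem cSpan_iSup {ι : Type*} (V : ι → Submodule ℝ (En n)) :
    CSpan (⨆ i, V i) = ⨆ i, CSpan (V i) := by
  rw [CSpan, iSup_eq_span, span_span_of_tower, span_iUnion, restrictScalars_iSup]
  rfl

theorem isOrtho_cSpan {V W : Submodule ℝ (En n)}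
    (h : ∀ v ∈ V, ∀ w ∈ W, inner ℂ v w = 0) : CSpan V ⟂ CSpan W := by
  have hC : span ℂ (V : Set (En n)) ⟂ span ℂ (W : Set (En n)) := isOrtho_span.mpr h
  rw [isOrtho_iff_inner_eq] at hC ⊢
  intro u hu w hw
  rw [EuclideanSpace.real_inner_eq_re_complex_inner, hC u hu w hw, Complex.zero_re]

theorem cSpan_eq_self_of_hasConstKahlerAngle_zero {V : Submodule ℝ (En n)}
    (hV : HasConstKahlerAngle V 0) : CSpan V = V := by
  refine restrictScalars_span_eq_of_I_smul_mem fun v hv => ?_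
  rw [mem_iff_norm_starProjection, ← sq_eq_sq₀ (norm_nonneg _) (norm_nonneg _)]
  simpa [Jc, norm_smul] using hV v hv

end ComplexSpan

theorem orthogonal_decomposition_of_kahler_decomposition_general (n : ℕ)
    (V : Submodule ℝ (En n)) (r : ℕ)
    (Vs : Fin r → Submodule ℝ (En n)) (φ : Fin r → ℝ)
    (hsum : V = ⨆ i, Vs i)
    (hangle : ∀ i, HasConstKahlerAngle (Vs i) (φ i))
    (hherm : ∀ i j, i ≠ j → ∀ v ∈ Vs i, ∀ w ∈ Vs j, (inner ℂ v w : ℂ) = 0) :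
    (Vᗮ = (⨆ i, (CSpan (Vs i) ⊓ (Vs i)ᗮ)) ⊔ (CSpan V)ᗮ) ∧
    (∀ i j, i ≠ j → ∀ v ∈ CSpan (Vs i) ⊓ (Vs i)ᗮ, ∀ w ∈ CSpan (Vs j) ⊓ (Vs j)ᗮ,
      (inner ℝ v w : ℝ) = 0) ∧
    (∀ i, ∀ v ∈ CSpan (Vs i) ⊓ (Vs i)ᗮ, ∀ w ∈ (CSpan V)ᗮ, (inner ℝ v w : ℝ) = 0) ∧
    (∀ i, φ i = 0 → CSpan (Vs i) = Vs i) ∧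
    (∀ i, CSpan (Vs i) ⊓ (Vs i)ᗮ ≠ ⊥ → φ i ≠ 0) := by
  have hortho : Pairwise fun i j => CSpan (Vs i) ⟂ CSpan (Vs j) :=
    fun i j hij => isOrtho_cSpan (hherm i j hij)
  have hflat : ∀ i, φ i = 0 → CSpan (Vs i) = Vs i := fun i hφi =>
    cSpan_eq_self_of_hasConstKahlerAngle_zero (hφi ▸ hangle i)
  subst hsum
  refine ⟨?_, fun i j hij v hv w hw => (hortho hij).inner_eq hv.1 hw.1, fun i v hv w hw => ?_,
    hflat, fun i hi hφi => hi ?_⟩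
  · rw [cSpan_iSup]
    exact orthogonal_iSup_eq_of_pairwise_isOrtho hortho fun i => le_cSpan _
  · exact inner_right_of_mem_orthogonal (cSpan_mono (le_iSup Vs i) hv.1) hw
  · rw [hflat i hφi]
    exact inf_orthogonal_eq_bot _

/-- Given a Kähler-angle decomposition `V = V_1 ⊕ ⋯ ⊕ V_r`, the real orthogonal
complement of `V` in `ℂ^n` is the internal orthogonal direct sum of the subspaces
`ℂV_i ⊖ V_i` together with the orthogonal complement of `ℂV`; the summand
`ℂV_i ⊖ V_i` is nonzero only when `φ_i ≠ 0`, since `ℂV_i = V_i` when `φ_i = 0`. -/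
theorem orthogonal_decomposition_of_kahler_decomposition (n : ℕ)
    (V : Submodule ℝ (En n)) (r : ℕ)
    (Vs : Fin r → Submodule ℝ (En n)) (φ : Fin r → ℝ)
    (hφ : ∀ i, 0 ≤ φ i ∧ φ i ≤ Real.pi / 2)
    (hφmono : StrictMono φ)
    (hne : ∀ i, Vs i ≠ ⊥)
    (hsum : V = ⨆ i, Vs i)
    (horth : ∀ i j, i ≠ j → ∀ v ∈ Vs i, ∀ w ∈ Vs j, (inner ℝ v w : ℝ) = 0)
    (hangle : ∀ i, HasConstKahlerAngle (Vs i) (φ i))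
    (hherm : ∀ i j, i ≠ j → ∀ v ∈ Vs i, ∀ w ∈ Vs j, (inner ℂ v w : ℂ) = 0) :
    (Vᗮ = (⨆ i, (CSpan (Vs i) ⊓ (Vs i)ᗮ)) ⊔ (CSpan V)ᗮ) ∧
    (∀ i j, i ≠ j → ∀ v ∈ CSpan (Vs i) ⊓ (Vs i)ᗮ, ∀ w ∈ CSpan (Vs j) ⊓ (Vs j)ᗮ,
      (inner ℝ v w : ℝ) = 0) ∧
    (∀ i, ∀ v ∈ CSpan (Vs i) ⊓ (Vs i)ᗮ, ∀ w ∈ (CSpan V)ᗮ, (inner ℝ v w : ℝ) = 0) ∧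
    (∀ i, φ i = 0 → CSpan (Vs i) = Vs i) ∧
    (∀ i, CSpan (Vs i) ⊓ (Vs i)ᗮ ≠ ⊥ → φ i ≠ 0) :=
  orthogonal_decomposition_of_kahler_decomposition_general n V r Vs φ hsum hangle hherm
end
end
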